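/- arXiv:1004.2425 — 2 statements merged into one kernel-verified Lean document; each statement's English description precedes it below -/
import Mathlib

section
/- For every integer k ≥ 2 and every p ∈ (0,1), with c(p) = 1 - 2^{-k} + p·2^{-k} and h(x) = -x·ln(x) - (1-x)·ln(1-x), the quantity k·ln(2) - h(c(p)) - c(p)·ln(2^k - 1) is bounded below by 2^{-k}·(p + (1-p)·ln(1-p)). -/
/-!
With `q = 2⁻ᵏ` one has `k ln 2 = -ln q`, `2ᵏ - 1 = (1 - q) / q` and `1 - c = q (1 - p)`, so the left-hand
side is the Kullback–Leibler divergence of Bernoulli(`c`) from Bernoulli(`1 - q`),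
`c ln (c / (1 - q)) + (1 - c) ln ((1 - c) / q)`. Its second term is `q (1 - p) ln (1 - p)`, and its first
is at least `c - (1 - q) = q p` because `ln x ≥ 1 - 1 / x`.
-/

open Real

lemma sub_le_mul_log_div {a c : ℝ} (ha : 0 < a) (hc : 0 < c) : c - a ≤ c * log (c / a) := by
  have hlog := one_sub_inv_le_log_of_pos (div_pos hc ha)
  rw [inv_div] at hlog
  calc c - a = c * (1 - a / c) := by field_simp
    _ ≤ c * log (c / a) := mul_le_mul_of_nonneg_left hlog hc.le

lemma neg_log_sub_entropy_sub_mul_log_eq_kl {q c : ℝ} (hq0 : 0 < q) (hq1 : q < 1)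
    (hc0 : 0 < c) (hc1 : c < 1) :
    -log q - (-c * log c - (1 - c) * log (1 - c)) - c * log ((1 - q) / q) =
      c * log (c / (1 - q)) + (1 - c) * log ((1 - c) / q) := by
  rw [log_div hc0.ne' (sub_pos.2 hq1).ne', log_div (sub_pos.2 hc1).ne' hq0.ne',
    log_div (sub_pos.2 hq1).ne' hq0.ne']
  ring

/-- For k ≥ 2 and p ∈ (0,1), with c(p) = 1 - 2^{-k} + p·2^{-k} and
h(x) = -x ln x - (1-x) ln(1-x), we have
k ln 2 - h(c(p)) - c(p) ln(2^k - 1) ≥ 2^{-k} (p + (1-p) ln(1-p)). -/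
theorem stmt_0 (k : ℕ) (hk : 2 ≤ k) (p : ℝ) (hp : p ∈ Set.Ioo (0:ℝ) 1)
    (h : ℝ → ℝ) (hh : ∀ x, h x = -x * Real.log x - (1 - x) * Real.log (1 - x))
    (c : ℝ) (hc : c = 1 - (2:ℝ)^(-(k:ℤ)) + p * (2:ℝ)^(-(k:ℤ))) :
    (k : ℝ) * Real.log 2 - h c - c * Real.log ((2:ℝ)^k - 1) ≥
      (2:ℝ)^(-(k:ℤ)) * (p + (1 - p) * Real.log (1 - p)) := by
  obtain ⟨hp0, hp1⟩ := hp
  set q : ℝ := (2:ℝ)^(-(k:ℤ)) with hq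
  have hq0 : 0 < q := by positivity
  have hq1 : q < 1 := zpow_lt_one_of_neg₀ one_lt_two (by omega)
  have hklog : (k:ℝ) * log 2 = -log q := by rw [hq, log_zpow]; push_cast; ring
  have hpow : (2:ℝ)^k - 1 = (1 - q) / q := by rw [hq, zpow_neg, zpow_natCast]; field_simp
  have h1c : 1 - c = q * (1 - p) := by rw [hc]; ring
  have hc0 : 0 < c := by nlinarith
  have hc1 : c < 1 := by nlinarith
  have hcross : (1 - c) * log ((1 - c) / q) = q * (1 - p) * log (1 - p) := by
    rw [h1c, mul_div_cancel_left₀ _ hq0.ne']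
  have hgap : q * p ≤ c * log (c / (1 - q)) := by
    have := sub_le_mul_log_div (sub_pos.2 hq1) hc0
    linarith
  rw [hh, hklog, hpow, neg_log_sub_entropy_sub_mul_log_eq_kl hq0 hq1 hc0 hc1, hcross]
  linarith
end

section
/- Let m be a positive even integer and k, n, α with kαn = m edges on each side of a bipartite graph. In the permutation-based regular formula model, the number binom(αn, cαn) · ((kαn/2)!)² · coef(((1+x)^k - 1)^{cαn}, x^{kαn/2}) counts the pairs (choice of a set of cαn satisfied clauses, edge permutation) for which the fixed truth assignment satisfies exactly that set of clauses (each such clause receiving at least one true literal); equivalently, the probability that the all-zero assignment is p-satisfying equals binom(αn, cαn)·((kαn/2)!)²·coef(s(x)^{cαn}, x^{kαn/2}) / (kαn)!, where s(x) = (1+x)^k - 1. -/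
open Polynomial Finset

namespace Stmt13Aux

variable {α : Type*} [Fintype α] [DecidableEq α]

/-- Permutations mapping `p`-elements to `q`-elements correspond to pairs of equivs. -/
def permRespectEquiv (p q : α → Prop) [DecidablePred p] [DecidablePred q] :
    {π : Equiv.Perm α // ∀ x, p x ↔ q (π x)} ≃
      ({x // p x} ≃ {x // q x}) × ({x // ¬ p x} ≃ {x // ¬ q x}) where
  toFun π := ⟨Equiv.subtypeEquiv π.1 π.2, Equiv.subtypeEquiv π.1 (fun x => not_congr (π.2 x))⟩
  invFun e := ⟨(Equiv.sumCompl p).symm.trans ((Equiv.sumCongr e.1 e.2).trans (Equiv.sumCompl q)), by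
    intro x
    by_cases hx : p x
    · simp [Equiv.sumCompl_symm_apply_of_pos hx, (e.1 ⟨x, hx⟩).2, hx]
    · simp [Equiv.sumCompl_symm_apply_of_neg hx, (e.2 ⟨x, hx⟩).2, hx]⟩
  left_inv := by
    rintro ⟨π, hπ⟩
    ext x
    by_cases hx : p x
    · simp [Equiv.sumCompl_symm_apply_of_pos hx]
    · simp [Equiv.sumCompl_symm_apply_of_neg hx]
  right_inv := by
    rintro ⟨e₁, e₂⟩
    refine Prod.ext ?_ ?_
    · ext x
      simp [Equiv.sumCompl_symm_apply_of_pos x.2]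
    · ext x
      simp [Equiv.sumCompl_symm_apply_of_neg x.2]

lemma card_filter_perm_image (A S : Finset α) (hcard : A.card = S.card) :
    (univ.filter fun π : Equiv.Perm α => A.image π = S).card
      = A.card.factorial * (Fintype.card α - A.card).factorial := by
  have key : ∀ π : Equiv.Perm α, A.image π = S ↔ ∀ x, x ∈ A ↔ π x ∈ S := by
    intro π
    constructor
    · intro h x
      constructor
      · intro hx; rw [← h]; exact mem_image_of_mem _ hx
      · intro hx
        rw [← h, mem_image] at hx
        obtain ⟨a, ha, hax⟩ := hx
        rwa [← π.injective hax]
    · intro h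
      apply Finset.eq_of_subset_of_card_le
      · intro y hy
        rw [mem_image] at hy
        obtain ⟨a, ha, rfl⟩ := hy
        exact (h a).1 ha
      · rw [Finset.card_image_of_injective _ π.injective, hcard]
  have e1 : {π : Equiv.Perm α // A.image π = S} ≃ {π : Equiv.Perm α // ∀ x, x ∈ A ↔ π x ∈ S} :=
    Equiv.subtypeEquivRight key
  have e2 := e1.trans (permRespectEquiv (· ∈ A) (· ∈ S))
  have h1 : Fintype.card {x // x ∈ A} = Fintype.card {x // x ∈ S} := by
    simpa using hcard
  have h2 : Fintype.card {x // ¬ x ∈ A} = Fintype.card {x // ¬ x ∈ S} := by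
    rw [Fintype.card_subtype_compl, Fintype.card_subtype_compl, h1]
  calc (univ.filter fun π : Equiv.Perm α => A.image π = S).card
      = Fintype.card {π : Equiv.Perm α // A.image π = S} := (Fintype.card_subtype _).symm
    _ = Fintype.card (({x // x ∈ A} ≃ {x // x ∈ S}) × ({x // ¬ x ∈ A} ≃ {x // ¬ x ∈ S})) :=
        Fintype.card_congr e2
    _ = A.card.factorial * (Fintype.card α - A.card).factorial := by
        rw [Fintype.card_prod, Fintype.card_equiv (Fintype.equivOfCardEq h1),
          Fintype.card_equiv (Fintype.equivOfCardEq h2), Fintype.card_coe,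
          Fintype.card_subtype_compl, Fintype.card_coe]




variable (k : ℕ) {m : ℕ}

/-- The block (clause) of slots `[j*k, j*k+k)`. -/
def B (j : Fin m) : Finset (Fin (k * m)) := univ.filter (fun i => (i : ℕ) / k = (j : ℕ))

/-- The set of satisfied clauses. -/
def sat (S : Finset (Fin (k * m))) : Finset (Fin m) :=
  univ.filter (fun j => ∃ i ∈ S, (i : ℕ) / k = (j : ℕ))

variable {k}

lemma mem_B {i : Fin (k * m)} {j : Fin m} : i ∈ B k j ↔ (i : ℕ) / k = (j : ℕ) := by
  simp [B]

lemma mem_sat {S : Finset (Fin (k * m))} {j : Fin m} :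
    j ∈ sat k S ↔ ∃ i ∈ S, (i : ℕ) / k = (j : ℕ) := by simp [sat]

lemma eq_of_mem_B {i : Fin (k * m)} {j j' : Fin m} (h : i ∈ B k j) (h' : i ∈ B k j') :
    j = j' := by
  rw [mem_B] at h h'
  exact Fin.ext (h ▸ h')

lemma div_lt (hk : 1 ≤ k) (i : Fin (k * m)) : (i : ℕ) / k < m := by
  rw [Nat.div_lt_iff_lt_mul hk]
  have := i.2
  have h2 : k * m = m * k := Nat.mul_comm k m
  omega

lemma self_mem_B (hk : 1 ≤ k) (i : Fin (k * m)) : i ∈ B k ⟨(i : ℕ) / k, div_lt hk i⟩ :=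
  mem_B.2 rfl

lemma card_B (hk : 1 ≤ k) (j : Fin m) : (B k j).card = k := by
  have hbound : ∀ t : Fin k, (j : ℕ) * k + (t : ℕ) < k * m := by
    intro t
    have he : ((j : ℕ) + 1) * k = (j : ℕ) * k + k := by ring
    have h2 : ((j : ℕ) + 1) * k ≤ m * k := Nat.mul_le_mul_right k j.2
    have h3 : m * k = k * m := Nat.mul_comm m k
    have := t.2
    omega
  have himg : B k j = univ.image (fun t : Fin k => (⟨(j : ℕ) * k + t, hbound t⟩ : Fin (k * m))) := by
    ext i
    simp only [mem_B, mem_image, mem_univ, true_and]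
    constructor
    · intro h
      refine ⟨⟨(i : ℕ) % k, Nat.mod_lt _ hk⟩, ?_⟩
      apply Fin.ext
      simp only
      have hmod := Nat.div_add_mod (i : ℕ) k
      have hjk : (j : ℕ) * k = k * ((i : ℕ) / k) := by rw [h]; ring
      omega
    · rintro ⟨t, rfl⟩
      simp only
      rw [show (j : ℕ) * k + (t : ℕ) = (t : ℕ) + k * (j : ℕ) by ring,
        Nat.add_mul_div_left _ _ hk, Nat.div_eq_of_lt t.2]
      simp
  rw [himg, Finset.card_image_of_injective _ ?_, card_univ, Fintype.card_fin]
  intro a b hab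
  have : (j : ℕ) * k + (a : ℕ) = (j : ℕ) * k + (b : ℕ) := congrArg Fin.val hab
  exact Fin.ext (by omega)

lemma B_disjoint {j j' : Fin m} (h : j ≠ j') : Disjoint (B k j) (B k j') :=
  Finset.disjoint_left.2 fun _ hi hi' => h (eq_of_mem_B hi hi')

/-- If `S` misses all blocks off `T`, its size is the sum of block intersections over `T`. -/
lemma sum_card_inter (hk : 1 ≤ k) (S : Finset (Fin (k * m))) (T : Finset (Fin m))
    (hS : ∀ j : Fin m, j ∉ T → S ∩ B k j = ∅) :
    ∑ j ∈ T, (S ∩ B k j).card = S.card := by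
  have hcover : S = univ.biUnion (fun j : Fin m => S ∩ B k j) := by
    ext i
    simp only [mem_biUnion, mem_univ, true_and, mem_inter]
    exact ⟨fun hi => ⟨_, hi, self_mem_B hk i⟩, fun ⟨j, hj, _⟩ => hj⟩
  have hdisj : ∀ j ∈ (univ : Finset (Fin m)), ∀ j' ∈ (univ : Finset (Fin m)), j ≠ j' →
      Disjoint (S ∩ B k j) (S ∩ B k j') := fun j _ j' _ h =>
    (B_disjoint h).mono inter_subset_right inter_subset_right
  rw [Finset.sum_subset (subset_univ T) (fun j _ hj => by rw [hS j hj, card_empty]),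
    ← Finset.card_biUnion hdisj, ← hcover]



variable {k m : ℕ}

lemma card_prescribed (hk : 1 ≤ k) (T : Finset (Fin m)) (ν : Fin m → ℕ) :
    (univ.filter fun S : Finset (Fin (k * m)) =>
        (∀ j ∈ T, (S ∩ B k j).card = ν j) ∧ ∀ j ∉ T, S ∩ B k j = ∅).card
      = ∏ j ∈ T, k.choose (ν j) := by
  have key : ∀ (F : ∀ j ∈ T, Finset (Fin (k * m))),
      (∀ j (hj : j ∈ T), F j hj ∈ (B k j).powersetCard (ν j)) →
      ∀ j0 (hj0 : j0 ∈ T),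
        (T.biUnion (fun j => if h : j ∈ T then F j h else ∅)) ∩ B k j0 = F j0 hj0 := by
    intro F hF j0 hj0
    ext x
    simp only [mem_inter, mem_biUnion]
    constructor
    · rintro ⟨⟨j, hj, hx⟩, hxB⟩
      rw [dif_pos hj] at hx
      have hsub := (Finset.mem_powersetCard.1 (hF j hj)).1
      have : j = j0 := eq_of_mem_B (hsub hx) hxB
      subst this
      exact hx
    · intro hx
      have hsub := (Finset.mem_powersetCard.1 (hF j0 hj0)).1
      exact ⟨⟨j0, hj0, by rw [dif_pos hj0]; exact hx⟩, hsub hx⟩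
  rw [Finset.card_bij' (fun S _ => (fun j (_ : j ∈ T) => S ∩ B k j))
    (fun F _ => T.biUnion (fun j => if h : j ∈ T then F j h else ∅))
    (t := T.pi (fun j => (B k j).powersetCard (ν j))) ?hi ?hj ?left ?right]
  · rw [Finset.card_pi]
    exact Finset.prod_congr rfl fun j hj => by rw [Finset.card_powersetCard, card_B hk]
  case hi =>
    intro S hS
    rw [Finset.mem_pi]
    intro j hj
    rw [Finset.mem_powersetCard]
    exact ⟨inter_subset_right, (Finset.mem_filter.1 hS).2.1 j hj⟩
  case hj =>
    intro F hF
    rw [Finset.mem_pi] at hF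
    rw [Finset.mem_filter]
    refine ⟨mem_univ _, fun j hj => ?_, fun j hj => ?_⟩
    · rw [key F hF j hj]
      exact (Finset.mem_powersetCard.1 (hF j hj)).2
    · ext x
      simp only [mem_inter, mem_biUnion, Finset.notMem_empty, iff_false, not_and]
      rintro ⟨j', hj', hx⟩ hxB
      rw [dif_pos hj'] at hx
      have hsub := (Finset.mem_powersetCard.1 (hF j' hj')).1
      exact hj (eq_of_mem_B (hsub hx) hxB ▸ hj')
  case left =>
    intro S hS
    have hS' := (Finset.mem_filter.1 hS).2.2
    ext x
    simp only [mem_biUnion]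
    constructor
    · rintro ⟨j, hj, hx⟩
      rw [dif_pos hj] at hx
      exact (mem_inter.1 hx).1
    · intro hx
      set j0 : Fin m := ⟨(x : ℕ) / k, div_lt hk x⟩ with hj0def
      have hxB : x ∈ B k j0 := self_mem_B hk x
      have hj0T : j0 ∈ T := by
        by_contra hc
        have := hS' j0 hc
        have : x ∈ S ∩ B k j0 := mem_inter.2 ⟨hx, hxB⟩
        simp_all
      exact ⟨j0, hj0T, by rw [dif_pos hj0T]; exact mem_inter.2 ⟨hx, hxB⟩⟩
  case right =>
    intro F hF
    rw [Finset.mem_pi] at hF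
    funext j hj
    exact key F hF j hj


lemma apply_sum_single (T : Finset (Fin m)) (v : Fin m → ℕ) (j0 : Fin m) :
    (∑ j ∈ T, Finsupp.single j (v j)) j0 = if j0 ∈ T then v j0 else 0 := by
  rw [Finset.sum_apply']
  simp_rw [Finsupp.single_apply]
  exact Finset.sum_ite_eq' T j0 v

lemma card_fiber_mu (hk : 1 ≤ k) {n : ℕ} (T : Finset (Fin m)) (μ : Fin m →₀ ℕ)
    (hμ : μ ∈ T.finsuppAntidiag n) :
    (univ.filter fun S : Finset (Fin (k * m)) =>
        (S.card = n ∧ sat k S = T) ∧ (∑ j ∈ T, Finsupp.single j ((S ∩ B k j).card)) = μ).card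
      = ∏ j ∈ T, (if μ j = 0 then 0 else k.choose (μ j)) := by
  rw [Finset.mem_finsuppAntidiag] at hμ
  obtain ⟨hsum, hsupp⟩ := hμ
  by_cases hz : ∃ j0 ∈ T, μ j0 = 0
  · obtain ⟨j0, hj0, hz0⟩ := hz
    rw [Finset.prod_eq_zero hj0 (by simp [hz0]), Finset.card_eq_zero,
      Finset.filter_eq_empty_iff]
    rintro S - ⟨⟨hcard, hsat⟩, hf⟩
    have hj0sat : j0 ∈ sat k S := hsat ▸ hj0
    obtain ⟨i, hiS, hik⟩ := mem_sat.1 hj0sat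
    have hiB : i ∈ S ∩ B k j0 := Finset.mem_inter.2 ⟨hiS, mem_B.2 hik⟩
    have hval : (S ∩ B k j0).card = μ j0 := by
      have := DFunLike.congr_fun hf j0
      rwa [apply_sum_single, if_pos hj0] at this
    rw [hz0] at hval
    have hempty := Finset.card_eq_zero.1 hval
    rw [hempty] at hiB
    exact Finset.notMem_empty i hiB
  · push_neg at hz
    have hset : (univ.filter fun S : Finset (Fin (k * m)) =>
        (S.card = n ∧ sat k S = T) ∧ (∑ j ∈ T, Finsupp.single j ((S ∩ B k j).card)) = μ)
        = univ.filter fun S : Finset (Fin (k * m)) =>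
          (∀ j ∈ T, (S ∩ B k j).card = μ j) ∧ ∀ j ∉ T, S ∩ B k j = ∅ := by
      ext S
      simp only [Finset.mem_filter, Finset.mem_univ, true_and]
      constructor
      · rintro ⟨⟨hcard, hsat⟩, hf⟩
        refine ⟨fun j hj => ?_, fun j hj => ?_⟩
        · have := DFunLike.congr_fun hf j
          rwa [apply_sum_single, if_pos hj] at this
        · rw [Finset.eq_empty_iff_forall_notMem]
          intro i hi
          obtain ⟨hiS, hiB⟩ := Finset.mem_inter.1 hi
          exact hj (hsat ▸ mem_sat.2 ⟨i, hiS, mem_B.1 hiB⟩)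
      · rintro ⟨h1, h2⟩
        have hsat : sat k S = T := by
          ext j
          rw [mem_sat]
          constructor
          · rintro ⟨i, hiS, hik⟩
            by_contra hc
            have hempty := h2 j hc
            have : i ∈ S ∩ B k j := Finset.mem_inter.2 ⟨hiS, mem_B.2 hik⟩
            rw [hempty] at this
            exact absurd this (Finset.notMem_empty i)
          · intro hj
            have hcard' := h1 j hj
            have hne := hz j hj
            have hpos : 0 < (S ∩ B k j).card := by omega
            obtain ⟨i, hi⟩ := Finset.card_pos.1 hpos
            exact ⟨i, (Finset.mem_inter.1 hi).1, mem_B.1 (Finset.mem_inter.1 hi).2⟩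
        refine ⟨⟨?_, hsat⟩, ?_⟩
        · rw [← sum_card_inter hk S T h2, Finset.sum_congr rfl h1]
          exact hsum
        · ext j0
          rw [apply_sum_single]
          by_cases hj0 : j0 ∈ T
          · rw [if_pos hj0, h1 j0 hj0]
          · rw [if_neg hj0]
            exact (Finsupp.notMem_support_iff.1 (fun hc => hj0 (hsupp hc))).symm
    rw [hset, card_prescribed hk T μ]
    exact Finset.prod_congr rfl fun j hj => by rw [if_neg (hz j hj)]

lemma card_fiber_T (hk : 1 ≤ k) (n : ℕ) (T : Finset (Fin m)) :
    ((univ.filter fun S : Finset (Fin (k * m)) => S.card = n ∧ sat k S = T).card : ℤ)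
      = (((1 + Polynomial.X : Polynomial ℤ) ^ k - 1) ^ T.card).coeff n := by
  have hoff : ∀ S : Finset (Fin (k * m)), sat k S = T → ∀ j ∉ T, S ∩ B k j = ∅ := by
    intro S hsat j hj
    rw [Finset.eq_empty_iff_forall_notMem]
    intro i hi
    obtain ⟨hiS, hiB⟩ := Finset.mem_inter.1 hi
    exact hj (hsat ▸ mem_sat.2 ⟨i, hiS, mem_B.1 hiB⟩)
  have hnat : (univ.filter fun S : Finset (Fin (k * m)) =>
        S.card = n ∧ sat k S = T).card
      = ∑ μ ∈ T.finsuppAntidiag n, ∏ j ∈ T, (if μ j = 0 then 0 else k.choose (μ j)) := by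
    rw [Finset.card_eq_sum_card_fiberwise
      (f := fun S => ∑ j ∈ T, Finsupp.single j ((S ∩ B k j).card))
      (t := T.finsuppAntidiag n) ?_]
    · refine Finset.sum_congr rfl fun μ hμ => ?_
      rw [Finset.filter_filter]
      exact card_fiber_mu hk T μ hμ
    · intro S hS
      obtain ⟨hcard, hsat⟩ := (Finset.mem_filter.1 hS).2
      rw [Finset.mem_coe, Finset.mem_finsuppAntidiag]
      constructor
      · have heval : ∀ j ∈ T,
            (∑ j' ∈ T, Finsupp.single j' ((S ∩ B k j').card)) j = (S ∩ B k j).card :=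
          fun j hj => by rw [apply_sum_single, if_pos hj]
        rw [Finset.sum_congr rfl heval, sum_card_inter hk S T (hoff S hsat), hcard]
      · intro j hj
        rw [Finsupp.mem_support_iff] at hj
        by_contra hjT
        rw [apply_sum_single, if_neg hjT] at hj
        exact hj rfl
  have hpoly : (((1 + Polynomial.X : Polynomial ℤ) ^ k - 1) ^ T.card).coeff n
      = ∑ μ ∈ T.finsuppAntidiag n, ∏ j ∈ T,
          ((if μ j = 0 then 0 else k.choose (μ j) : ℕ) : ℤ) := by
    rw [show ((1 + Polynomial.X : Polynomial ℤ) ^ k - 1) ^ T.card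
        = ∏ _j ∈ T, ((1 + Polynomial.X : Polynomial ℤ) ^ k - 1) by rw [Finset.prod_const]]
    rw [← Polynomial.coeff_coe]
    have hcoe : ((∏ _j ∈ T, ((1 + Polynomial.X : Polynomial ℤ) ^ k - 1) : Polynomial ℤ) :
          PowerSeries ℤ)
        = ∏ _j ∈ T, (((1 + Polynomial.X : Polynomial ℤ) ^ k - 1 : Polynomial ℤ) :
            PowerSeries ℤ) := by
      rw [← Polynomial.coeToPowerSeries.ringHom_apply, map_prod]
      simp [Polynomial.coeToPowerSeries.ringHom_apply]
    rw [hcoe, PowerSeries.coeff_prod]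
    refine Finset.sum_congr rfl fun μ hμ => Finset.prod_congr rfl fun j hj => ?_
    rw [Polynomial.coeff_coe, Polynomial.coeff_sub, Polynomial.coeff_one_add_X_pow,
      Polynomial.coeff_one]
    rcases Nat.eq_zero_or_pos (μ j) with h0 | h0
    · simp [h0]
    · rw [if_neg (by omega), if_neg (by omega)]
      simp
  rw [hnat, hpoly]
  push_cast
  rfl

lemma card_S_sets (hk : 1 ≤ k) (n cm : ℕ) :
    ((univ.filter fun S : Finset (Fin (k * m)) =>
        S.card = n ∧ (sat k S).card = cm).card : ℤ)
      = (m.choose cm : ℤ) * (((1 + Polynomial.X : Polynomial ℤ) ^ k - 1) ^ cm).coeff n := by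
  rw [Finset.card_eq_sum_card_fiberwise (f := fun S => sat k S)
      (t := Finset.powersetCard cm (univ : Finset (Fin m)))
      (fun S hS => Finset.mem_powersetCard_univ.2 (Finset.mem_filter.1 hS).2.2)]
  have hfib : ∀ T ∈ Finset.powersetCard cm (univ : Finset (Fin m)),
      (((univ.filter fun S : Finset (Fin (k * m)) =>
          S.card = n ∧ (sat k S).card = cm).filter fun S => sat k S = T).card : ℤ)
        = (((1 + Polynomial.X : Polynomial ℤ) ^ k - 1) ^ cm).coeff n := by
    intro T hT
    have hTcard := Finset.mem_powersetCard_univ.1 hT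
    have hset : ((univ.filter fun S : Finset (Fin (k * m)) =>
          S.card = n ∧ (sat k S).card = cm).filter fun S => sat k S = T)
        = univ.filter fun S : Finset (Fin (k * m)) => S.card = n ∧ sat k S = T := by
      rw [Finset.filter_filter]
      ext S
      simp only [Finset.mem_filter, Finset.mem_univ, true_and]
      constructor
      · rintro ⟨⟨h1, h2⟩, h3⟩; exact ⟨h1, h3⟩
      · rintro ⟨h1, h3⟩; exact ⟨⟨h1, h3 ▸ hTcard⟩, h3⟩
    rw [hset, card_fiber_T hk n T, hTcard]
  calc ((∑ T ∈ Finset.powersetCard cm (univ : Finset (Fin m)),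
        ((univ.filter fun S : Finset (Fin (k * m)) =>
          S.card = n ∧ (sat k S).card = cm).filter fun S => sat k S = T).card : ℕ) : ℤ)
      = ∑ T ∈ Finset.powersetCard cm (univ : Finset (Fin m)),
          (((univ.filter fun S : Finset (Fin (k * m)) =>
            S.card = n ∧ (sat k S).card = cm).filter fun S => sat k S = T).card : ℤ) := by
        push_cast; rfl
    _ = ∑ _T ∈ Finset.powersetCard cm (univ : Finset (Fin m)),
          (((1 + Polynomial.X : Polynomial ℤ) ^ k - 1) ^ cm).coeff n :=
        Finset.sum_congr rfl hfib
    _ = (m.choose cm : ℤ) * (((1 + Polynomial.X : Polynomial ℤ) ^ k - 1) ^ cm).coeff n := by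
        rw [Finset.sum_const, Finset.card_powersetCard, Finset.card_univ, Fintype.card_fin,
          nsmul_eq_mul]

end Stmt13Aux

open Finset in
/-- Regular random k-SAT formulas with m = αn clauses are configurations,
i.e. permutations of the k·m edge slots (matching literal-side slots to
clause-side slots).  Under the all-zero assignment exactly half of the
literal-side slots (say the first k·m/2) belong to true literals, and the
clause of clause-side slot e is ⌊e/k⌋.  A clause is satisfied iff it receives
at least one true-literal slot.  The number of configurations in which the
all-zero assignment satisfies exactly cm clauses equals
C(m, cm) · ((k·m/2)!)² · coef(((1+x)^k - 1)^{cm}, x^{k·m/2});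
equivalently, dividing by the total number (k·m)! of configurations gives the
probability that the all-zero assignment is p-satisfying. -/
theorem stmt_13 (k m cm : ℕ) (hk : 1 ≤ k) (hm : 0 < m) (hcm : cm ≤ m)
    (heven : 2 ∣ k * m) :
    ((Finset.univ.filter (fun π : Equiv.Perm (Fin (k * m)) =>
        (Finset.univ.filter (fun j : Fin m =>
          ∃ i : Fin (k * m), (i : ℕ) < k * m / 2 ∧ (π i : ℕ) / k = (j : ℕ))).card
          = cm)).card : ℤ) =
      (m.choose cm : ℤ) * ((k * m / 2).factorial : ℤ)^2 *
        (((1 + Polynomial.X : Polynomial ℤ)^k - 1)^cm).coeff (k * m / 2) := by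
  have hNh : k * m / 2 * 2 = k * m := Nat.div_mul_cancel heven
  set h := k * m / 2 with hh
  set A : Finset (Fin (k * m)) := univ.filter (fun i => (i : ℕ) < h) with hAdef
  have hle : h ≤ k * m := Nat.div_le_self _ _
  have hAcard : A.card = h := by
    have himg : A = univ.image (Fin.castLE hle) := by
      ext i
      simp only [hAdef, mem_filter, mem_univ, true_and, mem_image]
      constructor
      · intro hi
        exact ⟨⟨(i : ℕ), hi⟩, Fin.ext rfl⟩
      · rintro ⟨t, -, rfl⟩
        exact t.2
    rw [himg, Finset.card_image_of_injective _ (Fin.castLE_injective hle), card_univ,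
      Fintype.card_fin]
  have hcond : ∀ π : Equiv.Perm (Fin (k * m)),
      (Finset.univ.filter (fun j : Fin m =>
          ∃ i : Fin (k * m), (i : ℕ) < h ∧ (π i : ℕ) / k = (j : ℕ)))
        = Stmt13Aux.sat k (A.image π) := by
    intro π
    ext j
    simp only [mem_filter, mem_univ, true_and, Stmt13Aux.mem_sat, mem_image, hAdef]
    constructor
    · rintro ⟨i, hi, hik⟩
      exact ⟨π i, ⟨i, by simp [hi], rfl⟩, hik⟩
    · rintro ⟨x, ⟨i, hi, rfl⟩, hik⟩
      exact ⟨i, hi, hik⟩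
  have hrw : (Finset.univ.filter (fun π : Equiv.Perm (Fin (k * m)) =>
        (Finset.univ.filter (fun j : Fin m =>
          ∃ i : Fin (k * m), (i : ℕ) < h ∧ (π i : ℕ) / k = (j : ℕ))).card = cm))
      = Finset.univ.filter (fun π : Equiv.Perm (Fin (k * m)) =>
          (Stmt13Aux.sat k (A.image ⇑π)).card = cm) := by
    apply Finset.filter_congr
    intro π _
    rw [hcond π]
  rw [hrw]
  rw [Finset.card_eq_sum_card_fiberwise (f := fun π : Equiv.Perm (Fin (k * m)) => A.image π)
      (t := univ.filter (fun S : Finset (Fin (k * m)) =>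
        S.card = h ∧ (Stmt13Aux.sat k S).card = cm))
      (fun π hπ => by
        rw [Finset.mem_coe, mem_filter]
        refine ⟨mem_univ _, ?_, (mem_filter.1 hπ).2⟩
        rw [Finset.card_image_of_injective _ π.injective, hAcard])]
  have hfib : ∀ S ∈ univ.filter (fun S : Finset (Fin (k * m)) =>
      S.card = h ∧ (Stmt13Aux.sat k S).card = cm),
      ((univ.filter (fun π : Equiv.Perm (Fin (k * m)) =>
          (Stmt13Aux.sat k (A.image ⇑π)).card = cm)).filter
          (fun π : Equiv.Perm (Fin (k * m)) => A.image ⇑π = S)).card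
        = h.factorial * h.factorial := by
    intro S hS
    obtain ⟨hScard, hSsat⟩ := (mem_filter.1 hS).2
    have hset : ((univ.filter (fun π : Equiv.Perm (Fin (k * m)) =>
          (Stmt13Aux.sat k (A.image ⇑π)).card = cm)).filter
          (fun π : Equiv.Perm (Fin (k * m)) => A.image ⇑π = S))
        = univ.filter (fun π : Equiv.Perm (Fin (k * m)) => A.image ⇑π = S) := by
      rw [Finset.filter_filter]
      ext π
      simp only [mem_filter, mem_univ, true_and]
      exact ⟨fun ⟨_, h2⟩ => h2, fun h2 => ⟨by rw [h2, hSsat], h2⟩⟩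
    rw [hset, Stmt13Aux.card_filter_perm_image A S (by rw [hAcard, hScard]), hAcard,
      Fintype.card_fin]
    have hhalf : k * m - h = h := by omega
    rw [hhalf]
  rw [Finset.sum_congr rfl hfib, Finset.sum_const, smul_eq_mul]
  push_cast
  rw [Stmt13Aux.card_S_sets hk h cm]
  ring
end
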